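/- arXiv:2304.10615 — 2 statements merged into one kernel-verified Lean document; each statement's English description precedes it below -/
import Mathlib

section
/- Let 2 ≤ p < q, K ≥ 1, λ_w > 1, λ_z > 0, a(w), a(z) ≥ 0 and Λ > 0 with Λ = λ_w^p + a(w)λ_w^q = λ_z^p + a(z)λ_z^q. Suppose a(w)λ_w^q ≤ K²λ_w^p, a(z) ≤ a(w) + E with E ≥ 0 satisfying E·λ_w^q ≤ λ_w^p. Then λ_w ≤ 2^{1/p}·λ_z. -/
/-- Comparability of intrinsic scaling parameters (Lemma 5.2). -/
theorem stmt13 (p q K lamw lamz aw az Λ E : ℝ)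
    (hp : 2 ≤ p) (hpq : p < q) (hK : 1 ≤ K)
    (hlamw : 1 < lamw) (hlamz : 0 < lamz)
    (haw : 0 ≤ aw) (haz : 0 ≤ az) (hΛ : 0 < Λ)
    (hΛw : Λ = lamw ^ p + aw * lamw ^ q)
    (hΛz : Λ = lamz ^ p + az * lamz ^ q)
    (hKw : aw * lamw ^ q ≤ K ^ 2 * lamw ^ p)
    (hE : 0 ≤ E) (hazaw : az ≤ aw + E)
    (hEsmall : E * lamw ^ q ≤ lamw ^ p) :
    lamw ≤ 2 ^ ((1:ℝ) / p) * lamz := by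
  by_contra h
  push_neg at h
  have hp0 : 0 < p := by linarith
  have hq0 : 0 < q := by linarith
  have hlw0 : 0 < lamw := by linarith
  have h2p : (0:ℝ) < 2 ^ ((1:ℝ)/p) := Real.rpow_pos_of_pos (by norm_num) _
  -- lamz < lamw * 2^(-1/p)
  have hz : lamz < lamw * 2 ^ (-(1:ℝ)/p) := by
    rw [neg_div, Real.rpow_neg (by norm_num), ← div_eq_mul_inv, lt_div_iff₀ h2p]
    linarith [h]
  have hzp : lamz ^ p < lamw ^ p * (1/2 : ℝ) := by
    calc lamz ^ p < (lamw * 2 ^ (-(1:ℝ)/p)) ^ p :=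
          Real.rpow_lt_rpow hlamz.le hz hp0
      _ = lamw ^ p * (1/2 : ℝ) := by
          rw [Real.mul_rpow hlw0.le (Real.rpow_pos_of_pos (by norm_num) _).le,
            ← Real.rpow_mul (by norm_num : (0:ℝ) ≤ 2), neg_div, neg_mul,
            div_mul_cancel₀ _ hp0.ne']
          norm_num [Real.rpow_neg_one]
  have h2q : (2:ℝ) ^ (-(1:ℝ)/p * q) ≤ 1/2 := by
    have : -(1:ℝ)/p * q ≤ -1 := by
      have h1 : -(1:ℝ)/p * q = -(q/p) := by ring
      rw [h1, neg_le_neg_iff]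
      exact (one_le_div hp0).mpr hpq.le
    calc (2:ℝ) ^ (-(1:ℝ)/p * q) ≤ 2 ^ (-1 : ℝ) :=
          Real.rpow_le_rpow_left_iff (by norm_num) |>.mpr this
      _ = 1/2 := by norm_num [Real.rpow_neg_one]
  have hzq : lamz ^ q < lamw ^ q * (1/2 : ℝ) := by
    calc lamz ^ q < (lamw * 2 ^ (-(1:ℝ)/p)) ^ q :=
          Real.rpow_lt_rpow hlamz.le hz hq0
      _ = lamw ^ q * (2:ℝ) ^ (-(1:ℝ)/p * q) := by
          rw [Real.mul_rpow hlw0.le (Real.rpow_pos_of_pos (by norm_num) _).le,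
            ← Real.rpow_mul (by norm_num)]
      _ ≤ lamw ^ q * (1/2) := by
          apply mul_le_mul_of_nonneg_left h2q (Real.rpow_pos_of_pos hlw0 _).le
  have hwq0 : 0 < lamw ^ q := Real.rpow_pos_of_pos hlw0 _
  have hwp0 : 0 < lamw ^ p := Real.rpow_pos_of_pos hlw0 _
  have hwpΛ : lamw ^ p ≤ Λ := by nlinarith
  have : Λ < Λ := by
    calc Λ = lamz ^ p + az * lamz ^ q := hΛz
      _ ≤ lamz ^ p + (aw + E) * lamz ^ q := by
          have := Real.rpow_pos_of_pos hlamz q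
          nlinarith
      _ < lamw ^ p * (1/2) + (aw + E) * (lamw ^ q * (1/2)) := by
          have hawE : 0 ≤ aw + E := by linarith
          nlinarith [mul_le_mul_of_nonneg_left hzq.le hawE]
      _ = (1/2) * (lamw ^ p + aw * lamw ^ q) + (1/2) * (E * lamw ^ q) := by ring
      _ ≤ (1/2) * Λ + (1/2) * lamw ^ p := by nlinarith
      _ ≤ Λ := by nlinarith
  exact lt_irrefl _ this
end

section
/- Let 2 ≤ p < q, K ≥ 1, λ_z, λ_w > 0, a(z), a(w) > 0 satisfy: a(z)λ_z^q ≤ K²λ_z^p, λ_w ≤ 2^{1/p}λ_z, a(w) ≤ 2a(z), and Λ ≤ 2a(w)λ_w^q where Λ = λ_w^p + a(w)λ_w^q. Then λ_z^{2-p} ≤ 8K²·λ_w²/Λ. -/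
/-!
Since `Λ ≤ 2 a(w) λ_w^q`, the `q`-phase dominates at `w`, so `Λ / λ_w²` is at most
`2 a(w) λ_w^{q-2} ≤ 4 a(z) λ_w^{q-2}`. The comparison `λ_w ≤ 2^{1/p} λ_z` raised to the power
`q - 2 ≤ p` costs only a factor `2`, and the `p`-intrinsic bound `a(z) λ_z^{q-p} ≤ K²` at `z`
then gives `λ_z^{2-p} Λ ≤ 8 K² λ_w²`.
-/

open Real

lemma Real.rpow_le_mul_rpow_of_le_rpow_one_div_mul {x y c p s : ℝ} (hx : 0 ≤ x) (hy : 0 ≤ y)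
    (hc : 1 ≤ c) (hxy : x ≤ c ^ (1 / p) * y) (hs : 0 ≤ s) (hsp : s / p ≤ 1) :
    x ^ s ≤ c * y ^ s :=
  calc x ^ s ≤ (c ^ (1 / p) * y) ^ s := rpow_le_rpow hx hxy hs
    _ = c ^ (s / p) * y ^ s := by
      rw [mul_rpow (by positivity) hy, ← rpow_mul (by positivity), one_div_mul_eq_div]
    _ ≤ c * y ^ s := by
      gcongr
      simpa using rpow_le_rpow_of_exponent_le hc hsp

lemma Real.mul_rpow_sub_le_of_mul_rpow_le {a b z p q : ℝ} (hz : 0 < z)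
    (h : a * z ^ q ≤ b * z ^ p) : a * z ^ (q - p) ≤ b := by
  rw [rpow_sub hz, ← mul_div_assoc, div_le_iff₀ (rpow_pos_of_pos hz p)]
  exact h

theorem stmt15_general (p q K lamz lamw az aw Λ : ℝ)
    (hp : 2 ≤ p) (hpq : p < q) (hq2 : (q - 2) / p ≤ 1)
    (hlamz : 0 < lamz) (hlamw : 0 < lamw) (haz : 0 < az) (haw : 0 < aw)
    (hKz : az * lamz ^ q ≤ K ^ 2 * lamz ^ p)
    (hcomp : lamw ≤ 2 ^ ((1:ℝ) / p) * lamz)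
    (ha : aw ≤ 2 * az)
    (hΛ : Λ = lamw ^ p + aw * lamw ^ q)
    (hΛle : Λ ≤ 2 * aw * lamw ^ q) :
    lamz ^ (2 - p) ≤ 8 * K ^ 2 * lamw ^ (2:ℝ) / Λ := by
  have hΛpos : 0 < Λ := hΛ ▸ by positivity
  have hw : lamw ^ (q - 2) ≤ 2 * lamz ^ (q - 2) :=
    rpow_le_mul_rpow_of_le_rpow_one_div_mul hlamw.le hlamz.le one_le_two hcomp
      (by linarith) hq2
  have hz : az * lamz ^ (q - p) ≤ K ^ 2 := mul_rpow_sub_le_of_mul_rpow_le hlamz hKz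
  rw [le_div_iff₀ hΛpos]
  calc lamz ^ (2 - p) * Λ ≤ lamz ^ (2 - p) * (2 * aw * lamw ^ q) := by gcongr
    _ ≤ lamz ^ (2 - p) * (2 * (2 * az) * (lamw ^ (2:ℝ) * lamw ^ (q - 2))) := by
      rw [← rpow_add hlamw, add_sub_cancel]
      gcongr
    _ ≤ lamz ^ (2 - p) * (2 * (2 * az) * (lamw ^ (2:ℝ) * (2 * lamz ^ (q - 2)))) := by gcongr
    _ = 8 * lamw ^ (2:ℝ) * (az * (lamz ^ (2 - p) * lamz ^ (q - 2))) := by ring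
    _ = 8 * lamw ^ (2:ℝ) * (az * lamz ^ (q - p)) := by
      rw [← rpow_add hlamz]
      ring_nf
    _ ≤ 8 * lamw ^ (2:ℝ) * K ^ 2 := by gcongr
    _ = 8 * K ^ 2 * lamw ^ (2:ℝ) := by ring

/-- Case 3 of the Vitali covering argument: comparison of the `p`-intrinsic
time scale with the `(p,q)`-intrinsic one. -/
theorem stmt15 (p q K lamz lamw az aw Λ : ℝ)
    (hp : 2 ≤ p) (hpq : p < q) (hq2 : (q - 2) / p ≤ 1) (hK : 1 ≤ K)
    (hlamz : 0 < lamz) (hlamw : 0 < lamw) (haz : 0 < az) (haw : 0 < aw)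
    (hKz : az * lamz ^ q ≤ K ^ 2 * lamz ^ p)
    (hcomp : lamw ≤ 2 ^ ((1:ℝ) / p) * lamz)
    (ha : aw ≤ 2 * az)
    (hΛ : Λ = lamw ^ p + aw * lamw ^ q)
    (hΛle : Λ ≤ 2 * aw * lamw ^ q) :
    lamz ^ (2 - p) ≤ 8 * K ^ 2 * lamw ^ (2:ℝ) / Λ :=
  stmt15_general p q K lamz lamw az aw Λ hp hpq hq2 hlamz hlamw haz haw hKz hcomp ha hΛ hΛle
end
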